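/- If G is a finite simple 2K₂-free graph on n ≥ 2 vertices (i.e., G has no induced subgraph isomorphic to the disjoint union of two edges), then θ(G) ≤ 2·log₂ n. -/

import Mathlib

namespace ThetaPaper

variable {α : Type*} [DecidableEq α]

def delF (X : Finset (Finset α)) (v : α) : Finset (Finset α) :=
  X.filter fun S => v ∉ S

def lkF (X : Finset (Finset α)) (v : α) : Finset (Finset α) :=
  X.filter fun T => v ∉ T ∧ insert v T ∈ X

def vertF (X : Finset (Finset α)) : Finset α := X.biUnion id

def nonConeF (X : Finset (Finset α)) : Finset α :=
  (vertF X).filter fun v => delF X v ≠ lkF X v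

lemma delF_card_lt {X : Finset (Finset α)} {v : α} (h : v ∈ nonConeF X) :
    (delF X v).card < X.card := by
  obtain ⟨A, hA, hvA⟩ := Finset.mem_biUnion.mp (Finset.mem_filter.mp h).1
  refine Finset.card_lt_card ⟨Finset.filter_subset _ _, fun hsub => ?_⟩
  have h2 := hsub hA
  rw [delF, Finset.mem_filter] at h2
  exact h2.2 hvA

lemma lkF_card_lt {X : Finset (Finset α)} {v : α} (h : v ∈ nonConeF X) :
    (lkF X v).card < X.card := by
  obtain ⟨A, hA, hvA⟩ := Finset.mem_biUnion.mp (Finset.mem_filter.mp h).1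
  refine Finset.card_lt_card ⟨Finset.filter_subset _ _, fun hsub => ?_⟩
  have h2 := hsub hA
  rw [lkF, Finset.mem_filter] at h2
  exact h2.2.1 hvA

def theta (X : Finset (Finset α)) : ℕ :=
  if h : (nonConeF X).Nonempty then
    (nonConeF X).attach.inf' (Finset.attach_nonempty_iff.mpr h) fun v =>
      max (theta (delF X v.1)) (theta (lkF X v.1) + 1)
  else 0
termination_by X.card
decreasing_by
  · exact delF_card_lt v.2
  · exact lkF_card_lt v.2

def IsComplex (X : Finset (Finset α)) : Prop :=
  ∀ A ∈ X, ∀ B, B ⊆ A → B ∈ X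

/-- `dim(X)`, as an integer: the maximum of `|A| - 1` over faces `A ∈ X`. -/
noncomputable def dimZ (X : Finset (Finset α)) : ℤ :=
  sSup {d : ℤ | ∃ A ∈ X, d = (A.card : ℤ) - 1}

/-- A circuit (minimal non-face) of `X`. -/
def IsCircuit (X : Finset (Finset α)) (S : Finset α) : Prop :=
  S ∉ X ∧ ∀ T ⊂ S, T ∈ X

/-- A circuit cover of `X`. -/
def IsCircuitCover (X : Finset (Finset α)) (C : Finset α) : Prop :=
  ∀ S : Finset α, IsCircuit X S → (S.card : ℤ) - 1 ≤ ((S ∩ C).card : ℤ)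

/-- The circuit cover number `ccn(X)` of a complex with vertex set `V`. -/
noncomputable def ccnZ (V : Finset α) (X : Finset (Finset α)) : ℤ :=
  sInf {k : ℤ | ∃ C ⊆ V, IsCircuitCover X C ∧
    k = dimZ (X.filter fun A => A ⊆ C) + 1}

/-- The simplicial join. -/
def joinF (X₁ X₂ : Finset (Finset α)) : Finset (Finset α) :=
  X₁.biUnion fun A => X₂.image fun B => A ∪ B

/-- A facet (maximal face) of `X`. -/
def IsFacet (X : Finset (Finset α)) (B : Finset α) : Prop :=
  B ∈ X ∧ ∀ C ∈ X, B ⊆ C → C = B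

/-- An elementary `k`-collapse: remove the interval `[A, B]` where `A` is a face of size
at most `k` contained in the unique facet `B`. -/
def ElemCollapse (k : ℕ) (X Y : Finset (Finset α)) : Prop :=
  ∃ A B : Finset α, A ∈ X ∧ A.card ≤ k ∧ IsFacet X B ∧ A ⊆ B ∧
    (∀ C, IsFacet X C → A ⊆ C → C = B) ∧
    Y = X.filter fun C => ¬ (A ⊆ C ∧ C ⊆ B)

/-- `X` is `k`-collapsible: it reduces to the void complex by elementary `k`-collapses. -/
def Collapsible (k : ℕ) (X : Finset (Finset α)) : Prop :=
  Relation.ReflTransGen (ElemCollapse k) X ∅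

/-- The collapsibility number `C(X)`. -/
noncomputable def collapseNum (X : Finset (Finset α)) : ℕ :=
  sInf {k : ℕ | Collapsible k X}

/-- `k(X)`: the maximum size of a set `{x₁, …, x_k}` of vertices of `X` admitting facets
`A₁, …, A_{k+1}` with `x_i ∉ A_i` and `x_i ∈ A_j` for `i < j`. -/
noncomputable def kNum (X : Finset (Finset α)) : ℕ :=
  sSup {k : ℕ | ∃ (x : Fin k → α) (A : Fin (k + 1) → Finset α),
    Function.Injective x ∧ (∀ i, {x i} ∈ X) ∧ (∀ j, IsFacet X (A j)) ∧
    (∀ i : Fin k, x i ∉ A i.castSucc) ∧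
    (∀ (i : Fin k) (j : Fin (k + 1)), (i : ℕ) < (j : ℕ) → x i ∈ A j)}

/-- Vertex decomposable simplicial complexes. -/
inductive VertexDecomposable : Finset (Finset α) → Prop
  | simplex (S : Finset α) : VertexDecomposable S.powerset
  | shed (X : Finset (Finset α)) (v : α) (hv : {v} ∈ X)
      (hdel : VertexDecomposable (delF X v)) (hlk : VertexDecomposable (lkF X v))
      (hfacet : ∀ B, IsFacet (delF X v) B → IsFacet X B) : VertexDecomposable X

section Graphs

variable {V : Type*} [Fintype V] [DecidableEq V]

open Classical in
/-- The independence complex of a graph, as a `Finset` of faces. -/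
noncomputable def indComplex (G : SimpleGraph V) : Finset (Finset V) :=
  Finset.univ.powerset.filter fun A => ∀ x ∈ A, ∀ y ∈ A, ¬ G.Adj x y

/-- The theta-number of a graph: the theta-number of its independence complex. -/
noncomputable def thetaG (G : SimpleGraph V) : ℕ := theta (indComplex G)

/-- A graph is chordal if it has no induced cycle of length greater than `3`. -/
def Chordal {W : Type*} (G : SimpleGraph W) : Prop :=
  ∀ n : ℕ, 3 < n → IsEmpty (SimpleGraph.cycleGraph n ↪g G)

/-- Contraction of the edge `xy`: the merged vertex is `x`, and `y` becomes isolated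
(isolated vertices are irrelevant for the independence complex/theta-number). -/
def contractEdge (G : SimpleGraph V) (x y : V) : SimpleGraph V where
  Adj a b := a ≠ b ∧ a ≠ y ∧ b ≠ y ∧
    ((a = x ∧ (G.Adj x b ∨ G.Adj y b)) ∨
     (b = x ∧ (G.Adj a x ∨ G.Adj a y)) ∨
     (a ≠ x ∧ b ≠ x ∧ G.Adj a b))
  symm := by
    constructor
    rintro a b ⟨hab, hay, hby, h⟩
    refine ⟨Ne.symm hab, hby, hay, ?_⟩
    rcases h with ⟨ha, h⟩ | ⟨hb, h⟩ | ⟨ha, hb, h⟩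
    · exact Or.inr (Or.inl ⟨ha, h.imp (fun t => t.symm) (fun t => t.symm)⟩)
    · exact Or.inl ⟨hb, h.imp (fun t => t.symm) (fun t => t.symm)⟩
    · exact Or.inr (Or.inr ⟨hb, ha, h.symm⟩)
  loopless := by constructor; rintro a ⟨h, -⟩; exact h rfl

/-- One edge-contraction step: `H` is obtained from `G` by contracting an edge of `G`. -/
def ContractionStep (G H : SimpleGraph V) : Prop :=
  ∃ x y, G.Adj x y ∧ H = contractEdge G x y

/-- A matching of `G` (a set of pairwise disjoint edges). -/
def IsMatching (G : SimpleGraph V) (M : Finset (Sym2 V)) : Prop :=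
  (∀ e ∈ M, e ∈ G.edgeSet) ∧
    ∀ e ∈ M, ∀ f ∈ M, e ≠ f → ∀ x, x ∈ e → x ∉ f

/-- An induced matching of `G`: a matching such that no two vertices belonging to
different edges of it are adjacent. -/
def IsInducedMatching (G : SimpleGraph V) (M : Finset (Sym2 V)) : Prop :=
  IsMatching G M ∧ ∀ e ∈ M, ∀ f ∈ M, e ≠ f → ∀ x ∈ e, ∀ y ∈ f, ¬ G.Adj x y

/-- The induced matching number `im(G)`. -/
noncomputable def inducedMatchingNum (G : SimpleGraph V) : ℕ :=
  sSup {k : ℕ | ∃ M, IsInducedMatching G M ∧ M.card = k}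

/-- A maximal matching. -/
def IsMaximalMatching (G : SimpleGraph V) (M : Finset (Sym2 V)) : Prop :=
  IsMatching G M ∧ ∀ N, IsMatching G N → M ⊆ N → N = M

/-- `min-m(G)`: the minimum size of a maximal matching. -/
noncomputable def minMaximalMatchingNum (G : SimpleGraph V) : ℕ :=
  sInf {k : ℕ | ∃ M, IsMaximalMatching G M ∧ M.card = k}

/-- Independent (stable) sets of a graph. -/
def IsIndepSet (G : SimpleGraph V) (A : Finset V) : Prop :=
  ∀ x ∈ A, ∀ y ∈ A, ¬ G.Adj x y

/-- A vertex cover. -/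
def IsVertexCover (G : SimpleGraph V) (C : Finset V) : Prop :=
  ∀ x y, G.Adj x y → x ∈ C ∨ y ∈ C

/-- `α(G[F])`: the maximum size of an independent set of `G` contained in `F`. -/
noncomputable def indepNumOn (G : SimpleGraph V) (F : Finset V) : ℕ :=
  sSup {k : ℕ | ∃ A ⊆ F, IsIndepSet G A ∧ A.card = k}

/-- The circuit cover number of a graph: `ccn(G) = min{α(G[F]) : F a vertex cover}`. -/
noncomputable def ccnG (G : SimpleGraph V) : ℕ :=
  sInf {k : ℕ | ∃ F, IsVertexCover G F ∧ k = indepNumOn G F}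

open Classical in
/-- The closed neighborhood of a vertex, as a `Finset`. -/
noncomputable def closedNbhd (G : SimpleGraph V) (x : V) : Finset V :=
  Finset.univ.filter fun z => z = x ∨ G.Adj x z

/-- The maximum privacy degree `Γ(G) = max{|N[x] \ N[y]| : xy ∈ E(G)}`. -/
noncomputable def privacyDeg (G : SimpleGraph V) : ℕ :=
  sSup {k : ℕ | ∃ x y, G.Adj x y ∧ k = (closedNbhd G x \ closedNbhd G y).card}

open Classical in
/-- The maximum degree `Δ(G)`. -/
noncomputable def maxDeg (G : SimpleGraph V) : ℕ :=
  sSup {k : ℕ | ∃ v, k = (Finset.univ.filter fun z => G.Adj v z).card}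

end Graphs

open Classical in
/-- `V(M)`: the set of vertices incident to the edges of `M`. -/
noncomputable def matchVerts {V : Type*} [Fintype V] (M : Finset (Sym2 V)) : Finset V :=
  Finset.univ.filter fun x => ∃ e ∈ M, x ∈ e

variable {X : Finset (Finset α)}

/-! Let `e(A)` be the number of ordered pairs of adjacent vertices of `A`. Take `v` of maximum
degree `Δ` in `G[A]` and let `R = A \ N[v]`. In a `2K₂`-free graph every neighbour of `v` meets
every edge of `G[R]`; counting incidences against the degree bound `Δ` gives at least as many
edges between `N(v)` and `R` as inside `R`, so `2 e(R) + 2 ≤ e(A)`. Branching at `v` in the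
recursion for `θ`, induction yields `θ(G[A]) ≤ log₂ e(A) ≤ log₂ |A|²`. -/

lemma theta_eq_zero_of_nonConeF_eq_empty (h : nonConeF X = ∅) : theta X = 0 := by
  rw [theta, dif_neg (by simp [h])]

lemma theta_le_of_mem_nonConeF {v : α} (hv : v ∈ nonConeF X) :
    theta X ≤ max (theta (delF X v)) (theta (lkF X v) + 1) := by
  rw [theta, dif_pos ⟨v, hv⟩]
  exact Finset.inf'_le _ (Finset.mem_attach _ ⟨v, hv⟩)

open Finset

section IndependenceComplex

variable {V : Type*} {G : SimpleGraph V} [DecidableRel G.Adj] {A : Finset V} {v w : V}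

variable (G) in
def indComplexOn (A : Finset V) : Finset (Finset V) :=
  {S ∈ A.powerset | ∀ x ∈ S, ∀ y ∈ S, ¬ G.Adj x y}

lemma mem_indComplexOn {S : Finset V} :
    S ∈ indComplexOn G A ↔ S ⊆ A ∧ ∀ x ∈ S, ∀ y ∈ S, ¬ G.Adj x y := by
  simp [indComplexOn]

variable [DecidableEq V]

variable (G) in
def nonNbhdIn (A : Finset V) (v : V) : Finset V :=
  {z ∈ A.erase v | ¬ G.Adj v z}

lemma nonNbhdIn_ssubset (hv : v ∈ A) : nonNbhdIn G A v ⊂ A :=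
  (filter_subset _ _).trans_ssubset (erase_ssubset hv)

lemma delF_indComplexOn : delF (indComplexOn G A) v = indComplexOn G (A.erase v) := by
  ext S
  simp only [delF, mem_filter, mem_indComplexOn, subset_erase]
  tauto

lemma lkF_indComplexOn (hv : v ∈ A) :
    lkF (indComplexOn G A) v = indComplexOn G (nonNbhdIn G A v) := by
  ext T
  simp only [lkF, nonNbhdIn, mem_filter, mem_indComplexOn, subset_iff, mem_erase]
  constructor
  · rintro ⟨⟨hTA, hT⟩, hvT, -, hvT'⟩
    exact ⟨fun x hx => ⟨⟨fun h => hvT (h ▸ hx), hTA hx⟩,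
      hvT' v (mem_insert_self v T) x (mem_insert_of_mem hx)⟩, hT⟩
  · rintro ⟨hTR, hT⟩
    have hTA : T ⊆ A := fun x hx => (hTR hx).1.2
    refine ⟨⟨hTA, hT⟩, fun h => (hTR h).1.1 rfl, insert_subset hv hTA, ?_⟩
    simp only [mem_insert, forall_eq_or_imp]
    exact ⟨⟨G.loopless.irrefl v, fun x hx => (hTR hx).2⟩,
      fun x hx => ⟨fun h => (hTR hx).2 h.symm, hT x hx⟩⟩

lemma mem_nonConeF_indComplexOn (hv : v ∈ A) (hw : w ∈ A) (hvw : G.Adj v w) :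
    v ∈ nonConeF (indComplexOn G A) := by
  have hv_vert : v ∈ vertF (indComplexOn G A) :=
    mem_biUnion.mpr ⟨{v}, by simpa [mem_indComplexOn] using hv, by simp⟩
  refine mem_filter.mpr ⟨hv_vert, fun h => ?_⟩
  have hw_del : {w} ∈ delF (indComplexOn G A) v := by
    simpa [delF, mem_indComplexOn, hw] using hvw.ne
  rw [h, lkF, mem_filter] at hw_del
  exact (mem_indComplexOn.mp hw_del.2.2).2 v (by simp) w (by simp) hvw

lemma theta_indComplexOn_eq_zero (h : ∀ x ∈ A, ∀ y ∈ A, ¬ G.Adj x y) :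
    theta (indComplexOn G A) = 0 := by
  refine theta_eq_zero_of_nonConeF_eq_empty (eq_empty_iff_forall_notMem.mpr fun v hv => ?_)
  obtain ⟨hvert, hne⟩ := mem_filter.mp hv
  obtain ⟨S, hS, hvS⟩ := mem_biUnion.mp hvert
  have hvA : v ∈ A := (mem_indComplexOn.mp hS).1 hvS
  refine hne (filter_congr fun T hT => ?_)
  have hTA := (mem_indComplexOn.mp hT).1
  have hins : insert v T ∈ indComplexOn G A :=
    mem_indComplexOn.mpr ⟨insert_subset hvA hTA, fun x hx y hy =>
      h x (insert_subset hvA hTA hx) y (insert_subset hvA hTA hy)⟩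
  simp [hins]

end IndependenceComplex

section Interedges

variable {V : Type*} (G : SimpleGraph V) [DecidableRel G.Adj]

lemma sum_interedges_fst (f : V → ℕ) (s t : Finset V) :
    ∑ p ∈ G.interedges s t, f p.1 = ∑ a ∈ s, #{b ∈ t | G.Adj a b} * f a := by
  rw [SimpleGraph.interedges_def, sum_filter, sum_product]
  refine sum_congr rfl fun a _ => ?_
  rw [card_filter, sum_mul]
  exact sum_congr rfl fun b _ => by split_ifs <;> simp

lemma card_interedges_eq_sum (s t : Finset V) :
    #(G.interedges s t) = ∑ a ∈ s, #{b ∈ t | G.Adj a b} := by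
  simpa using sum_interedges_fst G (fun _ => 1) s t

lemma sum_interedges_snd (f : V → ℕ) (s t : Finset V) :
    ∑ p ∈ G.interedges s t, f p.2 = ∑ p ∈ G.interedges t s, f p.1 :=
  sum_equiv (Equiv.prodComm V V) (fun _ => G.swap_mem_interedges_iff.symm) fun _ _ => rfl

lemma card_interedges_comm (s t : Finset V) :
    #(G.interedges s t) = #(G.interedges t s) := by
  simpa using sum_interedges_snd G (fun _ => 1) s t

lemma card_interedges_singleton_left {v : V} {W : Finset V} (h : ∀ w ∈ W, G.Adj v w) :
    #(G.interedges {v} W) = #W := by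
  rw [card_interedges_eq_sum, sum_singleton, filter_true_of_mem h]

variable [DecidableEq V]

lemma card_interedges_union_left {s₁ s₂ : Finset V} (h : Disjoint s₁ s₂) (t : Finset V) :
    #(G.interedges (s₁ ∪ s₂) t) = #(G.interedges s₁ t) + #(G.interedges s₂ t) := by
  simp only [card_interedges_eq_sum, sum_union h]

lemma card_interedges_union_right (s : Finset V) {t₁ t₂ : Finset V} (h : Disjoint t₁ t₂) :
    #(G.interedges s (t₁ ∪ t₂)) = #(G.interedges s t₁) + #(G.interedges s t₂) := by
  simp only [card_interedges_eq_sum, filter_union, ← sum_add_distrib,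
    card_union_of_disjoint (disjoint_filter_filter h)]

lemma card_interedges_le_two_mul_of_forall_adj_or_adj {R W : Finset V} (hW : W.Nonempty)
    (hmeet : ∀ a ∈ R, ∀ b ∈ R, G.Adj a b → ∀ w ∈ W, G.Adj a w ∨ G.Adj b w)
    (hdeg : ∀ a ∈ R, #{b ∈ R | G.Adj a b} ≤ #W) :
    #(G.interedges R R) ≤ 2 * #(G.interedges R W) := by
  set degW : V → ℕ := fun a => #{w ∈ W | G.Adj a w}
  have hcover : ∀ p ∈ G.interedges R R, #W ≤ degW p.1 + degW p.2 := fun p hp => by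
    obtain ⟨ha, hb, hab⟩ := G.mem_interedges_iff.mp hp
    refine (card_le_card fun w hw => ?_).trans (card_union_le _ _)
    simpa [hw] using hmeet _ ha _ hb hab w hw
  refine Nat.le_of_mul_le_mul_left ?_ hW.card_pos
  calc #W * #(G.interedges R R)
      = ∑ p ∈ G.interedges R R, #W := by rw [sum_const, smul_eq_mul, mul_comm]
    _ ≤ ∑ p ∈ G.interedges R R, (degW p.1 + degW p.2) := sum_le_sum hcover
    _ = 2 * ∑ a ∈ R, #{b ∈ R | G.Adj a b} * degW a := by
        rw [sum_add_distrib, sum_interedges_snd G degW, sum_interedges_fst, two_mul]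
    _ ≤ 2 * ∑ a ∈ R, #W * degW a :=
        Nat.mul_le_mul_left 2 (sum_le_sum fun a ha => Nat.mul_le_mul_right _ (hdeg a ha))
    _ = #W * (2 * #(G.interedges R W)) := by
        rw [← mul_sum, card_interedges_eq_sum]
        ring

lemma card_interedges_nonNbhdIn_add_le {A : Finset V} {v : V} (hv : v ∈ A) :
    #(G.interedges (nonNbhdIn G A v) (nonNbhdIn G A v))
      + 2 * #(G.interedges (nonNbhdIn G A v) {w ∈ A | G.Adj v w})
      + 2 * #{w ∈ A | G.Adj v w} ≤ #(G.interedges A A) := by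
  set R := nonNbhdIn G A v
  set W := {w ∈ A | G.Adj v w}
  have hvR : v ∉ R := fun h => (mem_erase.mp (mem_filter.mp h).1).1 rfl
  have hvW : v ∉ W := fun h => G.loopless.irrefl v (mem_filter.mp h).2
  have hRW : Disjoint R W :=
    disjoint_left.mpr fun z hzR hzW => (mem_filter.mp hzR).2 (mem_filter.mp hzW).2
  have hU : Disjoint (R ∪ W) {v} := by simp [hvR, hvW]
  have hsub : R ∪ W ∪ {v} ⊆ A :=
    union_subset (union_subset (nonNbhdIn_ssubset hv).subset (filter_subset _ _))
      (singleton_subset_iff.mpr hv)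
  have hvW' : #(G.interedges {v} W) = #W :=
    card_interedges_singleton_left G fun w hw => (mem_filter.mp hw).2
  have hmono := card_le_card (G.interedges_mono hsub hsub)
  simp only [card_interedges_union_left G hU, card_interedges_union_left G hRW,
    card_interedges_union_right G _ hU, card_interedges_union_right G _ hRW] at hmono
  have hWR : #(G.interedges W R) = #(G.interedges R W) := card_interedges_comm G W R
  have hWv : #(G.interedges W {v}) = #W := (card_interedges_comm G W {v}).trans hvW'
  omega

end Interedges

section TwoK2Free

variable {V : Type*} {G : SimpleGraph V}

def TwoK2Free (G : SimpleGraph V) : Prop :=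
  ¬ ∃ a b c d : V, G.Adj a b ∧ G.Adj c d ∧ a ≠ c ∧ a ≠ d ∧ b ≠ c ∧ b ≠ d ∧
    ¬ G.Adj a c ∧ ¬ G.Adj a d ∧ ¬ G.Adj b c ∧ ¬ G.Adj b d

lemma TwoK2Free.adj_or_adj (hG : TwoK2Free G) {a b v w : V} (hab : G.Adj a b) (hvw : G.Adj v w)
    (hav : a ≠ v) (hbv : b ≠ v) (hva : ¬ G.Adj v a) (hvb : ¬ G.Adj v b) :
    G.Adj a w ∨ G.Adj b w := by
  by_contra! h
  exact hG ⟨a, b, v, w, hab, hvw, hav, fun h' => hva (h' ▸ hvw), hbv,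
    fun h' => hvb (h' ▸ hvw), fun h' => hva h'.symm, h.1, fun h' => hvb h'.symm, h.2⟩

variable [DecidableEq V] [DecidableRel G.Adj] {A : Finset V}

lemma TwoK2Free.exists_two_mul_card_interedges_nonNbhdIn_add_two_le (hG : TwoK2Free G)
    (hA : ∃ v ∈ A, ∃ w ∈ A, G.Adj v w) :
    ∃ v ∈ A, (∃ w ∈ A, G.Adj v w) ∧
      2 * #(G.interedges (nonNbhdIn G A v) (nonNbhdIn G A v)) + 2 ≤ #(G.interedges A A) := by
  obtain ⟨u, hu, x, hx, hux⟩ := hA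
  obtain ⟨v, hv, hmax⟩ := A.exists_max_image (fun a => #{b ∈ A | G.Adj a b}) ⟨u, hu⟩
  have hRA := (nonNbhdIn_ssubset (G := G) hv).subset
  obtain ⟨w, hw⟩ : ({w ∈ A | G.Adj v w} : Finset V).Nonempty :=
    card_pos.mp ((card_pos.mpr ⟨x, mem_filter.mpr ⟨hx, hux⟩⟩).trans_le (hmax u hu))
  refine ⟨v, hv, ⟨w, (mem_filter.mp hw).1, (mem_filter.mp hw).2⟩, ?_⟩
  have hmeet := card_interedges_le_two_mul_of_forall_adj_or_adj G ⟨w, hw⟩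
    (fun a ha b hb hab y hy => by
      simp only [nonNbhdIn, mem_filter, mem_erase] at ha hb
      exact hG.adj_or_adj hab (mem_filter.mp hy).2 ha.1.1 hb.1.1 ha.2 hb.2)
    (fun a ha => (card_le_card (filter_subset_filter _ hRA)).trans (hmax a (hRA ha)))
  have hcount := card_interedges_nonNbhdIn_add_le G hv
  have hW : 1 ≤ #{w ∈ A | G.Adj v w} := card_pos.mpr ⟨w, hw⟩
  omega

theorem TwoK2Free.theta_indComplexOn_le_log (hG : TwoK2Free G) (A : Finset V) :
    theta (indComplexOn G A) ≤ Nat.log 2 #(G.interedges A A) := by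
  induction A using Finset.strongInduction with
  | H A ih =>
  by_cases hA : ∃ v ∈ A, ∃ w ∈ A, G.Adj v w
  swap
  · push Not at hA
    simp [theta_indComplexOn_eq_zero hA]
  obtain ⟨v, hv, ⟨w, hw, hvw⟩, hcard⟩ :=
    hG.exists_two_mul_card_interedges_nonNbhdIn_add_two_le hA
  set R := nonNbhdIn G A v
  have hdel : theta (indComplexOn G (A.erase v)) ≤ Nat.log 2 #(G.interedges A A) :=
    (ih _ (erase_ssubset hv)).trans <| Nat.log_mono_right <|
      card_le_card (G.interedges_mono (erase_subset _ _) (erase_subset _ _))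
  have hlk : theta (indComplexOn G R) + 1 ≤ Nat.log 2 #(G.interedges A A) :=
    calc theta (indComplexOn G R) + 1
        ≤ Nat.log 2 (#(G.interedges R R) + 1) + 1 :=
          Nat.add_le_add_right
            ((ih R (nonNbhdIn_ssubset hv)).trans (Nat.log_mono_right (by omega))) 1
      _ = Nat.log 2 ((#(G.interedges R R) + 1) * 2) := (Nat.log_mul_base one_lt_two (by omega)).symm
      _ ≤ Nat.log 2 #(G.interedges A A) := Nat.log_mono_right (by omega)
  calc theta (indComplexOn G A)
      ≤ max (theta (delF (indComplexOn G A) v)) (theta (lkF (indComplexOn G A) v) + 1) :=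
        theta_le_of_mem_nonConeF (mem_nonConeF_indComplexOn hv hw hvw)
    _ ≤ Nat.log 2 #(G.interedges A A) := by
        rw [delF_indComplexOn, lkF_indComplexOn hv]
        exact max_le hdel hlk

end TwoK2Free

theorem theta_le_two_mul_logb_card_of_twoK2Free_general {V : Type*} [Fintype V] [DecidableEq V] (G : SimpleGraph V)
    (hfree : ¬ ∃ a b c d : V, G.Adj a b ∧ G.Adj c d ∧
      a ≠ c ∧ a ≠ d ∧ b ≠ c ∧ b ≠ d ∧
      ¬ G.Adj a c ∧ ¬ G.Adj a d ∧ ¬ G.Adj b c ∧ ¬ G.Adj b d) :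
    (thetaG G : ℝ) ≤ 2 * Real.logb 2 (Fintype.card V) := by
  classical
  have hθ : thetaG G = theta (indComplexOn G univ) := by
    rw [thetaG]
    congr 1
    ext S
    simp [indComplex, indComplexOn]
  have hedges : #(G.interedges univ univ) ≤ Fintype.card V ^ 2 := by
    simpa [sq] using G.card_interedges_le_mul univ univ
  calc (thetaG G : ℝ)
      ≤ Nat.log 2 (Fintype.card V ^ 2) := by
        rw [hθ]
        exact_mod_cast (TwoK2Free.theta_indComplexOn_le_log hfree univ).trans
          (Nat.log_mono_right hedges)
    _ ≤ Real.logb 2 (Fintype.card V ^ 2 : ℕ) := by exact_mod_cast Real.natLog_le_logb _ 2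
    _ = 2 * Real.logb 2 (Fintype.card V) := by push_cast; rw [Real.logb_pow]; norm_cast

theorem theta_le_two_mul_logb_card_of_twoK2Free {V : Type*} [Fintype V] [DecidableEq V] (G : SimpleGraph V)
    (hn : 2 ≤ Fintype.card V)
    (hfree : ¬ ∃ a b c d : V, G.Adj a b ∧ G.Adj c d ∧
      a ≠ c ∧ a ≠ d ∧ b ≠ c ∧ b ≠ d ∧
      ¬ G.Adj a c ∧ ¬ G.Adj a d ∧ ¬ G.Adj b c ∧ ¬ G.Adj b d) :
    (thetaG G : ℝ) ≤ 2 * Real.logb 2 (Fintype.card V) :=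
  theta_le_two_mul_logb_card_of_twoK2Free_general G hfree

end ThetaPaper
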